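/- For every iteration index t ≥ 0, every solar state z, every channel state x, and every battery level y with 1 ≤ y ≤ N_B−2, the function Λ_t is non-increasing in the battery level: Λ_t(z,x,y+1) ≤ Λ_t(z,x,y). -/

import Mathlib

/-!
On-off energy-harvesting MDP value iteration.
`Va` is the one-step action-value operator, `Viter i` is the `i`-th value-iteration
function `V_i`, and `VIa i a` is the action-value function `V_i^a`.
-/

/-- The one-step action-value operator:
`Va NB aH pC pQ r lam V a z x y = a·r(x) + λ·Σ_j Σ_l Σ'_q aH(z,j)·pC(x,l)·pQ(z,q)·
V(j, l, min{N_B−1, y−a+q})`. -/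
noncomputable def Va {NH NC : ℕ} (NB : ℕ) (aH : Fin NH → Fin NH → ℝ)
    (pC : Fin NC → Fin NC → ℝ) (pQ : Fin NH → ℕ → ℝ) (r : Fin NC → ℝ) (lam : ℝ)
    (V : Fin NH → Fin NC → ℕ → ℝ) (a : ℕ) (z : Fin NH) (x : Fin NC) (y : ℕ) : ℝ :=
  a * r x + lam * ∑ j : Fin NH, ∑ l : Fin NC,
    ∑' q : ℕ, aH z j * pC x l * pQ z q * V j l (min (NB - 1) (y - a + q))

/-- Value iteration: `V_0 = 0` and `V_{i+1}(z,x,y) = max_{0 ≤ a ≤ min{y,1}} V_{i+1}^a(z,x,y)`. -/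
noncomputable def Viter {NH NC : ℕ} (NB : ℕ) (aH : Fin NH → Fin NH → ℝ)
    (pC : Fin NC → Fin NC → ℝ) (pQ : Fin NH → ℕ → ℝ) (r : Fin NC → ℝ) (lam : ℝ) :
    ℕ → Fin NH → Fin NC → ℕ → ℝ
  | 0 => fun _ _ _ => 0
  | (i + 1) => fun z x y =>
      (Finset.range (min y 1 + 1)).sup' Finset.nonempty_range_add_one
        (fun a => Va NB aH pC pQ r lam (Viter NB aH pC pQ r lam i) a z x y)

/-- Action-value iteration: `V_0^a = 0` and `V_{i+1}^a` is `Va` applied to `V_i`. -/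
noncomputable def VIa {NH NC : ℕ} (NB : ℕ) (aH : Fin NH → Fin NH → ℝ)
    (pC : Fin NC → Fin NC → ℝ) (pQ : Fin NH → ℕ → ℝ) (r : Fin NC → ℝ) (lam : ℝ) :
    ℕ → ℕ → Fin NH → Fin NC → ℕ → ℝ
  | 0 => fun _ _ _ _ => 0
  | (i + 1) => fun a z x y => Va NB aH pC pQ r lam (Viter NB aH pC pQ r lam i) a z x y

/-- The difference function `Θ_i(z,x,y) = V_i^1(z,x,y) − V_i^0(z,x,y)`. -/
noncomputable def Theta {NH NC : ℕ} (NB : ℕ) (aH : Fin NH → Fin NH → ℝ)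
    (pC : Fin NC → Fin NC → ℝ) (pQ : Fin NH → ℕ → ℝ) (r : Fin NC → ℝ) (lam : ℝ)
    (i : ℕ) (z : Fin NH) (x : Fin NC) (y : ℕ) : ℝ :=
  VIa NB aH pC pQ r lam i 1 z x y - VIa NB aH pC pQ r lam i 0 z x y

/-- The difference function
`Λ_i(z,x,y) = Σ_j Σ_l Σ'_q aH(z,j)·pC(x,l)·pQ(z,q)·
( V_i^1(j,l,min{N_B−1,y+q}) − V_i^0(j,l,min{N_B−1,y−1+q}) )`. -/
noncomputable def Lambda {NH NC : ℕ} (NB : ℕ) (aH : Fin NH → Fin NH → ℝ)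
    (pC : Fin NC → Fin NC → ℝ) (pQ : Fin NH → ℕ → ℝ) (r : Fin NC → ℝ) (lam : ℝ)
    (i : ℕ) (z : Fin NH) (x : Fin NC) (y : ℕ) : ℝ :=
  ∑ j : Fin NH, ∑ l : Fin NC, ∑' q : ℕ,
    aH z j * pC x l * pQ z q *
      (VIa NB aH pC pQ r lam i 1 j l (min (NB - 1) (y + q)) -
        VIa NB aH pC pQ r lam i 0 j l (min (NB - 1) (y - 1 + q)))


/-!
Since `V_{i+1}^1(n) = r(x) + V_{i+1}^0(n - 1)`, after writing `y = k + 1` the integrand of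
`Λ_{i+1}(z,x,y)` at arrival `q` is `r(l) - (U(min{N_B-1, k+q}) - U(min{N_B-2, k+q}))` with
`U = V_{i+1}^0(j,l,·)`. That bracket is zero below the battery cap and `U(N_B-1) - U(N_B-2)`
above it, so it is nondecreasing in `k + q` as soon as `U` is monotone in the battery level;
and `U` is monotone because every `V_i` is, by induction along value iteration.
-/

open Finset

lemma abs_comp_min_le_sum (F : ℕ → ℝ) (N n : ℕ) :
    |F (min N n)| ≤ ∑ m ∈ range (N + 1), |F m| :=
  single_le_sum (f := fun m => |F m|) (fun _ _ => abs_nonneg _)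
    (mem_range.mpr (Nat.lt_succ_of_le (min_le_left N n)))

lemma summable_mul_of_abs_le {w f : ℕ → ℝ} (hw0 : ∀ q, 0 ≤ w q) (hw : Summable w)
    {C : ℝ} (hf : ∀ q, |f q| ≤ C) : Summable fun q => w q * f q :=
  hw.mul_right C |>.of_norm_bounded fun q => by
    rw [norm_mul, Real.norm_eq_abs, Real.norm_eq_abs, abs_of_nonneg (hw0 q)]
    exact mul_le_mul_of_nonneg_left (hf q) (hw0 q)

lemma tsum_mul_le_tsum_mul_of_le {w f g : ℕ → ℝ} (hw0 : ∀ q, 0 ≤ w q) (hw : Summable w)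
    {C : ℝ} (hf : ∀ q, |f q| ≤ C) (hg : ∀ q, |g q| ≤ C) (hfg : ∀ q, f q ≤ g q) :
    ∑' q, w q * f q ≤ ∑' q, w q * g q :=
  Summable.tsum_le_tsum (fun q => mul_le_mul_of_nonneg_left (hfg q) (hw0 q))
    (summable_mul_of_abs_le hw0 hw hf) (summable_mul_of_abs_le hw0 hw hg)

lemma Monotone.monotone_sub_comp_min {U : ℕ → ℝ} (hU : Monotone U) {a b : ℕ} (hab : a ≤ b) :
    Monotone fun n => U (min b n) - U (min a n) := by
  intro n n' hn
  rcases le_or_gt a n with han | hna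
  · have hmin : min a n = min a n' := by omega
    simp only [hmin, sub_le_sub_iff_right]
    exact hU (min_le_min_left b hn)
  · have hmin : min b n = min a n := by omega
    simp only [hmin, sub_self, sub_nonneg]
    exact hU (min_le_min_right n' hab)

section ValueIteration

variable {NH NC NB : ℕ} {aH : Fin NH → Fin NH → ℝ} {pC : Fin NC → Fin NC → ℝ}
  {pQ : Fin NH → ℕ → ℝ} {r : Fin NC → ℝ} {lam : ℝ}

lemma Va_one (V : Fin NH → Fin NC → ℕ → ℝ) (z : Fin NH) (x : Fin NC) (y : ℕ) :
    Va NB aH pC pQ r lam V 1 z x y = r x + Va NB aH pC pQ r lam V 0 z x (y - 1) := by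
  simp [Va]

lemma Va_monotone (haH : ∀ z j, 0 ≤ aH z j) (hpC : ∀ x l, 0 ≤ pC x l)
    (hpQ : ∀ z q, 0 ≤ pQ z q) (hpQsummable : ∀ z, Summable (pQ z)) (hlam0 : 0 ≤ lam)
    {V : Fin NH → Fin NC → ℕ → ℝ} (hV : ∀ j l, Monotone (V j l))
    (a : ℕ) (z : Fin NH) (x : Fin NC) : Monotone (Va NB aH pC pQ r lam V a z x) := by
  intro y y' hy
  unfold Va
  refine add_le_add_right (mul_le_mul_of_nonneg_left
    (sum_le_sum fun j _ => sum_le_sum fun l _ => ?_) hlam0) _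
  exact tsum_mul_le_tsum_mul_of_le (w := fun q => aH z j * pC x l * pQ z q)
    (fun q => mul_nonneg (mul_nonneg (haH z j) (hpC x l)) (hpQ z q))
    ((hpQsummable z).mul_left _) (fun _ => abs_comp_min_le_sum _ _ _)
    (fun _ => abs_comp_min_le_sum _ _ _) (fun q => hV j l (min_le_min_left _ (by omega)))

lemma Viter_monotone (haH : ∀ z j, 0 ≤ aH z j) (hpC : ∀ x l, 0 ≤ pC x l)
    (hpQ : ∀ z q, 0 ≤ pQ z q) (hpQsummable : ∀ z, Summable (pQ z)) (hlam0 : 0 ≤ lam)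
    (i : ℕ) (z : Fin NH) (x : Fin NC) : Monotone (Viter NB aH pC pQ r lam i z x) := by
  induction i generalizing z x with
  | zero => exact fun _ _ _ => le_rfl
  | succ i ih =>
    intro y y' hy
    refine sup'_le nonempty_range_add_one _ fun a ha => le_sup'_of_le _ (b := a) ?_ ?_
    · simp only [mem_range] at ha ⊢
      omega
    · exact Va_monotone haH hpC hpQ hpQsummable hlam0 ih a z x hy

lemma antitone_Va_one_sub_Va_zero (haH : ∀ z j, 0 ≤ aH z j) (hpC : ∀ x l, 0 ≤ pC x l)
    (hpQ : ∀ z q, 0 ≤ pQ z q) (hpQsummable : ∀ z, Summable (pQ z)) (hlam0 : 0 ≤ lam)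
    {V : Fin NH → Fin NC → ℕ → ℝ} (hV : ∀ j l, Monotone (V j l)) (z : Fin NH) (x : Fin NC) :
    Antitone fun n => Va NB aH pC pQ r lam V 1 z x (min (NB - 1) (n + 1)) -
      Va NB aH pC pQ r lam V 0 z x (min (NB - 1) n) := by
  intro n n' hn
  have hcap : ∀ n, min (NB - 1) (n + 1) - 1 = min (NB - 1 - 1) n := by omega
  have hgap := (Va_monotone (NB := NB) (r := r) haH hpC hpQ hpQsummable hlam0 hV 0 z x)
    |>.monotone_sub_comp_min (Nat.sub_le (NB - 1) 1) hn
  simp only [Va_one, hcap] at hgap ⊢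
  linarith

lemma Lambda_add_one (i k : ℕ) (z : Fin NH) (x : Fin NC) :
    Lambda NB aH pC pQ r lam i z x (k + 1) = ∑ j, ∑ l, ∑' q, aH z j * pC x l * pQ z q *
      (VIa NB aH pC pQ r lam i 1 j l (min (NB - 1) (k + q + 1)) -
        VIa NB aH pC pQ r lam i 0 j l (min (NB - 1) (k + q))) := by
  simp only [Lambda, Nat.add_sub_cancel, add_right_comm]

end ValueIteration

theorem lambda_nonincreasing_in_battery_general {NH NC : ℕ} (NB : ℕ)
    (aH : Fin NH → Fin NH → ℝ) (pC : Fin NC → Fin NC → ℝ)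
    (pQ : Fin NH → ℕ → ℝ) (r : Fin NC → ℝ) (lam : ℝ)
    (haH : ∀ z j, 0 ≤ aH z j)
    (hpC : ∀ x l, 0 ≤ pC x l)
    (hpQ : ∀ z q, 0 ≤ pQ z q) (hpQsummable : ∀ z, Summable (pQ z))
    (hlam0 : 0 ≤ lam)
    (t : ℕ) (z : Fin NH) (x : Fin NC) (y : ℕ) (hy1 : 1 ≤ y) :
    Lambda NB aH pC pQ r lam t z x (y + 1) ≤ Lambda NB aH pC pQ r lam t z x y := by
  obtain ⟨k, rfl⟩ : ∃ k, y = k + 1 := ⟨y - 1, by omega⟩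
  cases t with
  | zero => simp [Lambda, VIa]
  | succ i =>
    rw [Lambda_add_one, Lambda_add_one]
    refine sum_le_sum fun j _ => sum_le_sum fun l _ => ?_
    set U := Viter NB aH pC pQ r lam i
    have hU := Viter_monotone haH hpC hpQ hpQsummable hlam0 (r := r) (NB := NB) i
    obtain ⟨C, hC⟩ : ∃ C, ∀ n, |Va NB aH pC pQ r lam U 1 j l (min (NB - 1) (n + 1)) -
        Va NB aH pC pQ r lam U 0 j l (min (NB - 1) n)| ≤ C :=
      ⟨_, fun n => (abs_sub _ _).trans
        (add_le_add (abs_comp_min_le_sum _ _ _) (abs_comp_min_le_sum _ _ _))⟩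
    exact tsum_mul_le_tsum_mul_of_le (w := fun q => aH z j * pC x l * pQ z q)
      (fun q => mul_nonneg (mul_nonneg (haH z j) (hpC x l)) (hpQ z q))
      ((hpQsummable z).mul_left _) (fun _ => hC _) (fun _ => hC _)
      (fun q => antitone_Va_one_sub_Va_zero haH hpC hpQ hpQsummable hlam0 hU j l
        (by omega : k + q ≤ k + 1 + q))

/-- for every iteration index `t`, solar state `z` and channel state `x`,
the function `Λ_t(z,x,·)` is non-increasing in the battery level on `{1,…,N_B−1}`. -/
theorem lambda_nonincreasing_in_battery {NH NC : ℕ} (NB : ℕ)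
    (hNH : 1 ≤ NH) (hNC : 1 ≤ NC) (hNB : 2 ≤ NB)
    (aH : Fin NH → Fin NH → ℝ) (pC : Fin NC → Fin NC → ℝ)
    (pQ : Fin NH → ℕ → ℝ) (r : Fin NC → ℝ) (lam : ℝ)
    (haH : ∀ z j, 0 ≤ aH z j) (haHsum : ∀ z, ∑ j, aH z j = 1)
    (hpC : ∀ x l, 0 ≤ pC x l) (hpCsum : ∀ x, ∑ l, pC x l = 1)
    (hpQ : ∀ z q, 0 ≤ pQ z q) (hpQsummable : ∀ z, Summable (pQ z))
    (hpQsum : ∀ z, (∑' q, pQ z q) = 1)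
    (hr : ∀ x, 0 ≤ r x) (hlam0 : 0 ≤ lam) (hlam1 : lam ≤ 1)
    (t : ℕ) (z : Fin NH) (x : Fin NC) (y : ℕ) (hy1 : 1 ≤ y) (hy2 : y ≤ NB - 2) :
    Lambda NB aH pC pQ r lam t z x (y + 1) ≤ Lambda NB aH pC pQ r lam t z x y :=
  lambda_nonincreasing_in_battery_general NB aH pC pQ r lam haH hpC hpQ hpQsummable hlam0 t z x y
    hy1
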